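/- arXiv:math-ph/0007042 — 2 statements merged into one kernel-verified Lean document; each statement's English description precedes it below -/
import Mathlib

section
/- Linearizable second-order equation from the integrable first-order lattice: let c be a complex scalar and let A_n : ℝ → (k×k complex matrices), indexed by n, be differentiable functions satisfying Ȧ_n = c ( A_{n−1} A_n − A_n A_{n+1} ). Let U_n : ℝ → (k×k complex matrices) be differentiable with U_n(t) invertible for all t and U̇_n = A_n U_n. Then each U_n is twice differentiable and satisfies Ü_n = U̇_n U_n⁻¹ U̇_n + c { U̇_{n−1} U_{n−1}⁻¹ U̇_n − U̇_n U_n⁻¹ U̇_{n+1} U_{n+1}⁻¹ U_n }. -/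
/-! Since `U̇ₘ = Aₘ Uₘ`, each quotient `U̇ₘ Uₘ⁻¹` on the right-hand side is `Aₘ`, which turns it
into `(c (Aₙ₋₁ Aₙ - Aₙ Aₙ₊₁) + Aₙ²) Uₙ = Ȧₙ Uₙ + Aₙ U̇ₙ`, the product-rule derivative of
`U̇ₙ = Aₙ Uₙ`. -/

theorem HasDerivAt.matrix_mul {𝕜 R : Type*} [NontriviallyNormedField 𝕜] [NormedRing R]
    [NormedAlgebra 𝕜 R] {l m n : Type*} [Fintype l] [Fintype m] [Fintype n]
    {f : 𝕜 → Matrix l m R} {g : 𝕜 → Matrix m n R} {f' : Matrix l m R} {g' : Matrix m n R}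
    {t : 𝕜} (hf : HasDerivAt f f' t) (hg : HasDerivAt g g' t) :
    HasDerivAt (fun s => f s * g s) (f' * g t + f t * g') t := by
  have hfij (i j) : HasDerivAt (fun s => f s i j) (f' i j) t :=
    hasDerivAt_pi.mp (hasDerivAt_pi.mp hf i) j
  have hgij (i j) : HasDerivAt (fun s => g s i j) (g' i j) t :=
    hasDerivAt_pi.mp (hasDerivAt_pi.mp hg i) j
  refine hasDerivAt_pi.mpr fun i => hasDerivAt_pi.mpr fun j => ?_
  simpa only [Matrix.mul_apply, Matrix.add_apply, Finset.sum_add_distrib] using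
    HasDerivAt.fun_sum fun r _ => (hfij i r).fun_mul (hgij r j)

/-- Derivation of the linearizable matrix evolution equation (3.43c) from the integrable
first-order lattice (3.43a) via the position (3.43b) of the paper: if
`Ȧ_n = c(A_{n−1} A_n − A_n A_{n+1})` and `U̇_n = A_n U_n` with `U_n` invertible, then
`Ü_n = U̇_n U_n⁻¹ U̇_n + c { U̇_{n−1} U_{n−1}⁻¹ U̇_n − U̇_n U_n⁻¹ U̇_{n+1} U_{n+1}⁻¹ U_n }`. -/
theorem lattice_second_order_linearizable (k : ℕ) (c : ℂ)
    (A : ℤ → ℝ → Matrix (Fin k) (Fin k) ℂ)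
    (hA : ∀ n t, HasDerivAt (A n) (c • (A (n - 1) t * A n t - A n t * A (n + 1) t)) t)
    (U : ℤ → ℝ → Matrix (Fin k) (Fin k) ℂ)
    (hUinv : ∀ n t, IsUnit (U n t))
    (hU : ∀ n t, HasDerivAt (U n) (A n t * U n t) t) :
    ∀ n t, HasDerivAt (fun s => A n s * U n s)
      ((A n t * U n t) * (U n t)⁻¹ * (A n t * U n t)
        + c • ((A (n - 1) t * U (n - 1) t) * (U (n - 1) t)⁻¹ * (A n t * U n t)
          - (A n t * U n t) * (U n t)⁻¹ * (A (n + 1) t * U (n + 1) t)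
            * (U (n + 1) t)⁻¹ * U n t)) t := by
  intro n t
  have cancel (m : ℤ) (X : Matrix (Fin k) (Fin k) ℂ) : X * U m t * (U m t)⁻¹ = X :=
    Matrix.mul_nonsing_inv_cancel_right _ X ((Matrix.isUnit_iff_isUnit_det _).mp (hUinv m t))
  convert (hA n t).matrix_mul (hU n t) using 1
  simp only [← Matrix.mul_assoc, cancel, Matrix.smul_mul, Matrix.sub_mul]
  abel
end

section
/- Solvability of the matrix equation (3.93): let A, B, C, D be constant k×k complex matrices with D invertible, and let V : ℝ → (k×k complex matrices) be three times differentiable with V(t) invertible for all t, satisfying the linear ODE with constant coefficients V⃛ = V D A + V̇ B + V̈ C. Then the matrix M(t) := D⁻¹ V(t)⁻¹ V̇(t) satisfies M̈ = A + M B + Ṁ C + M D M C − Ṁ D M − 2 M D Ṁ − M D M D M. -/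
/-!
For the logarithmic derivative `N = V⁻¹ V̇` one has `Ṅ = V⁻¹ V̈ - N²`. Differentiating once more,
the linear equation turns `V⁻¹ V⃛` into `D A + N B + V⁻¹ V̈ C`, and eliminating `V⁻¹ V̈ = Ṅ + N²`
leaves a second-order equation for `N` alone. Substituting `N = D M` gives (3.93).
-/

open Matrix

attribute [local instance] Matrix.normedAddCommGroup Matrix.normedSpace

noncomputable section

section Ring

variable {α R : Type*} [Ring R]

def invMul (V X : α → R) (s : α) : R := Ring.inverse (V s) * X s

theorem invMul_eq_of_linear {V V' V'' V''' : α → R} {A B C D : R} {t : α} (hu : IsUnit (V t))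
    (hODE : V''' t = V t * D * A + V' t * B + V'' t * C) :
    invMul V V''' t = D * A + invMul V V' t * B + invMul V V'' t * C := by
  simp only [invMul, hODE, mul_add, ← mul_assoc, Ring.inverse_mul_cancel _ hu, one_mul]

end Ring

section BanachAlgebra

variable {𝕜 𝔸 : Type*} [NontriviallyNormedField 𝕜] [NormedRing 𝔸] [NormedAlgebra 𝕜 𝔸]
  [HasSummableGeomSeries 𝔸] {V V' V'' V''' X X' : 𝕜 → 𝔸} {t : 𝕜}

theorem HasDerivAt.ringInverse (hV : HasDerivAt V (V' t) t) (hu : IsUnit (V t)) :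
    HasDerivAt (fun s => Ring.inverse (V s))
      (-(Ring.inverse (V t) * V' t * Ring.inverse (V t))) t := by
  obtain ⟨u, hu⟩ := hu
  have := (hu ▸ hasFDerivAt_ringInverse (𝕜 := 𝕜) u).comp_hasDerivAt t hV
  simpa [Function.comp_def, ← hu, Ring.inverse_unit] using this

theorem hasDerivAt_invMul (hV : HasDerivAt V (V' t) t) (hu : IsUnit (V t))
    (hX : HasDerivAt X (X' t) t) :
    HasDerivAt (invMul V X) (invMul V X' t - invMul V V' t * invMul V X t) t := by
  unfold invMul
  convert (hV.ringInverse hu).fun_mul hX using 1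
  noncomm_ring

theorem hasDerivAt_riccati {A B C D N N' : 𝔸}
    (hV : HasDerivAt V (V' t) t) (hu : IsUnit (V t)) (hV' : HasDerivAt V' (V'' t) t)
    (hV'' : HasDerivAt V'' (V''' t) t) (hODE : V''' t = V t * D * A + V' t * B + V'' t * C)
    (hN : N = invMul V V' t) (hN' : N' = invMul V V'' t - N * N) :
    HasDerivAt (fun s => invMul V V'' s - invMul V V' s * invMul V V' s)
      (D * A + N * B + N' * C + N * N * C - N' * N - 2 * (N * N') - N * N * N) t := by
  have hlog := hasDerivAt_invMul hV hu hV'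
  refine ((hasDerivAt_invMul hV hu hV'').sub (hlog.fun_mul hlog)).congr_deriv ?_
  rw [invMul_eq_of_linear hu hODE, hN', hN]
  noncomm_ring

end BanachAlgebra

/-- Solvability of the matrix equation (3.93) of the paper via the position (3.94) and the
linear equation (3.95): if `V⃛ = V D A + V̇ B + V̈ C` with `V` invertible and `D` invertible,
then `M := D⁻¹ V⁻¹ V̇` satisfies
`M̈ = A + M B + Ṁ C + M D M C − Ṁ D M − 2 M D Ṁ − M D M D M`. -/
theorem solvability_of_eq_393 (k : ℕ)
    (A B C D : Matrix (Fin k) (Fin k) ℂ) (hD : IsUnit D)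
    (V V' V'' V''' : ℝ → Matrix (Fin k) (Fin k) ℂ)
    (hVinv : ∀ t, IsUnit (V t))
    (hV : ∀ t, HasDerivAt V (V' t) t)
    (hV' : ∀ t, HasDerivAt V' (V'' t) t)
    (hV'' : ∀ t, HasDerivAt V'' (V''' t) t)
    (hODE : ∀ t, V''' t = V t * D * A + V' t * B + V'' t * C)
    (M : ℝ → Matrix (Fin k) (Fin k) ℂ)
    (hM : ∀ t, M t = D⁻¹ * ((V t)⁻¹ * V' t)) :
    (∀ t, DifferentiableAt ℝ M t) ∧
    ∀ t, HasDerivAt (deriv M)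
      (A + M t * B + deriv M t * C + M t * D * M t * C - deriv M t * D * M t
        - (2 : ℂ) • (M t * D * deriv M t) - M t * D * M t * D * M t) t := by
  -- Every norm on matrices induces the entrywise topology, so passing to the submultiplicative
  -- `linftyOp` norm leaves `HasDerivAt` unchanged.
  let _ : NormedRing (Matrix (Fin k) (Fin k) ℂ) := Matrix.linftyOpNormedRing
  let _ : NormedAlgebra ℝ (Matrix (Fin k) (Fin k) ℂ) := Matrix.linftyOpNormedAlgebra
  have : HasSummableGeomSeries (Matrix (Fin k) (Fin k) ℂ) :=
    @instHasSummableGeomSeriesOfCompleteSpace _ _ (FiniteDimensional.complete ℝ _)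
  have hMN : M = fun s => Ring.inverse D * invMul V V' s :=
    funext fun s => by rw [hM, nonsing_inv_eq_ringInverse, nonsing_inv_eq_ringInverse]; rfl
  have hM' (t : ℝ) : HasDerivAt M
      (Ring.inverse D * (invMul V V'' t - invMul V V' t * invMul V V' t)) t :=
    hMN ▸ (hasDerivAt_invMul (hV t) (hVinv t) (hV' t)).const_mul (Ring.inverse D)
  have hderivM : deriv M = fun s =>
      Ring.inverse D * (invMul V V'' s - invMul V V' s * invMul V V' s) :=
    funext fun t => (hM' t).deriv
  refine ⟨fun t => (hM' t).differentiableAt, fun t => ?_⟩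
  have hN : D * M t = invMul V V' t := by rw [hMN, Ring.mul_inverse_cancel_left _ _ hD]
  have hNdot : D * deriv M t = invMul V V'' t - D * M t * (D * M t) := by
    rw [hderivM, Ring.mul_inverse_cancel_left _ _ hD, hN]
  have hM'' := (hasDerivAt_riccati (hV t) (hVinv t) (hV' t) (hV'' t) (hODE t) hN hNdot).const_mul
    (Ring.inverse D)
  rw [← hderivM] at hM''
  refine hM''.congr_deriv ?_
  rw [Ring.inverse_mul_eq_iff_eq_mul _ _ _ hD, two_smul]
  noncomm_ring
end
end
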